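/- With the topology control algorithm of Algorithm 1, the total number of edges satisfies |A| ≤ 5n. -/

import Mathlib

noncomputable section

/-- The Gilbert graph on vertex set `Fin n`: `i ≠ j` are adjacent iff `dist (x i) (x j) ≤ R`. -/
def gilbert (n : ℕ) (x : Fin n → EuclideanSpace ℝ (Fin 2)) (R : ℝ) : SimpleGraph (Fin n) where
  Adj i j := i ≠ j ∧ dist (x i) (x j) ≤ R
  symm := by
    constructor
    intro i j h
    exact ⟨h.1.symm, by rw [dist_comm]; exact h.2⟩
  loopless := ⟨by intro i h; exact h.1 rfl⟩

/-- The lesser neighborhood `N_i = {j < i : dist (x i) (x j) ≤ R}`. -/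
def lesserN (n : ℕ) (x : Fin n → EuclideanSpace ℝ (Fin 2)) (R : ℝ) (i : Fin n) : Set (Fin n) :=
  {j | j < i ∧ dist (x i) (x j) ≤ R}

/-- Vertex `i` initiates a connection to `j` iff `j` is the maximum-index vertex of its
connected component in the Gilbert graph induced on the lesser neighborhood `N_i`. -/
def initiates (n : ℕ) (x : Fin n → EuclideanSpace ℝ (Fin 2)) (R : ℝ) (i j : Fin n) : Prop :=
  ∃ hj : j ∈ lesserN n x R i,
    ∀ k, ∀ hk : k ∈ lesserN n x R i,
      ((gilbert n x R).induce (lesserN n x R i)).Reachable ⟨j, hj⟩ ⟨k, hk⟩ → k ≤ j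

/-- The topology produced by Algorithm 1: the symmetrization of the initiated connections. -/
def Agraph (n : ℕ) (x : Fin n → EuclideanSpace ℝ (Fin 2)) (R : ℝ) : SimpleGraph (Fin n) where
  Adj i j := initiates n x R i j ∨ initiates n x R j i
  symm := ⟨fun i j h => Or.symm h⟩
  loopless := by
    constructor
    intro i h
    rcases h with ⟨hj, _⟩ | ⟨hj, _⟩ <;> exact absurd hj.1 (lt_irrefl i)

/-!
Every vertex `i` connects only to vertices within distance `R` of `x i`, and two of its targets
are more than `R` apart: otherwise they would be adjacent in the graph induced on `N_i`, hence in
one component, and each would be that component's maximum. Among points of a closed disc of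
radius `R` that are pairwise more than `R` apart, two of them seen from the centre under an angle
of at most `π / 3` would be within distance `R` by the law of cosines; so consecutive arguments
are more than `π / 3` apart, and six of them would cover more than the full turn `2π`. Hence each
vertex initiates at most five edges, and every edge is initiated by one of its endpoints.
-/

open Real Finset

theorem Finset.exists_card_sub_one_nsmul_le_sub {α : Type*} [AddCommGroup α] [LinearOrder α]
    [IsOrderedAddMonoid α] {s : Finset α} (hs : s.Nonempty) {d : α}
    (h : ∀ a ∈ s, ∀ b ∈ s, a < b → d < b - a) : ∃ a ∈ s, ∃ b ∈ s, (#s - 1) • d ≤ b - a := by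
  classical
  induction s using Finset.induction_on_max with
  | empty => simp at hs
  | insert c t hlt ih =>
    rcases t.eq_empty_or_nonempty with rfl | ht
    · exact ⟨c, mem_insert_self c ∅, c, mem_insert_self c ∅, by simp⟩
    obtain ⟨a, ha, b, hb, hab⟩ := ih ht fun a ha b hb =>
      h a (mem_insert_of_mem ha) b (mem_insert_of_mem hb)
    have hcb : d < c - b := h b (mem_insert_of_mem hb) c (mem_insert_self c t) (hlt b hb)
    refine ⟨a, mem_insert_of_mem ha, c, mem_insert_self c t, ?_⟩
    rw [card_insert_of_notMem fun hc => (hlt c hc).false, Nat.add_sub_cancel,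
      ← Nat.sub_add_cancel ht.card_pos, succ_nsmul]
    calc (#t - 1) • d + d ≤ (b - a) + (c - b) := add_le_add hab hcb.le
      _ = c - a := by abel

theorem Real.card_le_five_of_cos_sub_lt_half {A : Finset ℝ} (hA : ∀ a ∈ A, a ∈ Set.Ioc (-π) π)
    (h : (A : Set ℝ).Pairwise fun a b => cos (a - b) < 1 / 2) : #A ≤ 5 := by
  have half_le_cos : ∀ θ, 0 ≤ θ → θ ≤ π / 3 → 1 / 2 ≤ cos θ := fun θ h0 h1 => by
    rw [← cos_pi_div_three]
    exact cos_le_cos_of_nonneg_of_le_pi h0 (by linarith [pi_pos]) h1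
  have hgap : ∀ a ∈ A, ∀ b ∈ A, a < b → π / 3 < b - a := fun a ha b hb hab => by
    by_contra! hle
    exact (h hb ha hab.ne').not_ge (half_le_cos _ (by linarith) hle)
  by_contra! h6
  obtain ⟨a, ha, b, hb, hab⟩ := exists_card_sub_one_nsmul_le_sub (card_pos.1 (by omega)) hgap
  have h5 : 5 * (π / 3) ≤ b - a := by
    have : (5 : ℝ) ≤ (#A - 1 : ℕ) := by exact_mod_cast (by omega : 5 ≤ #A - 1)
    rw [nsmul_eq_mul] at hab
    nlinarith [pi_pos]
  obtain ⟨ha₁, -⟩ := hA a ha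
  obtain ⟨-, hb₂⟩ := hA b hb
  -- Going from `b` on to `a + 2π` closes the circle, so that last gap is at most `π / 3`.
  have : cos (a - b) < 1 / 2 := h ha hb (by rintro rfl; linarith [pi_pos])
  rw [← cos_add_two_pi] at this
  exact this.not_ge (half_le_cos _ (by linarith) (by linarith))

theorem Complex.norm_sub_le_of_half_le_cos_arg_sub {z w : ℂ} {R : ℝ} (hz : ‖z‖ ≤ R)
    (hw : ‖w‖ ≤ R) (hcos : 1 / 2 ≤ Real.cos (arg z - arg w)) : ‖z - w‖ ≤ R := by
  have hre : (z * (starRingEnd ℂ) w).re = ‖z‖ * ‖w‖ * Real.cos (arg z - arg w) := by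
    rw [Real.cos_sub, mul_re, conj_re, conj_im, ← norm_mul_cos_arg z, ← norm_mul_sin_arg z,
      ← norm_mul_cos_arg w, ← norm_mul_sin_arg w]
    ring
  have hsq : ‖z - w‖ ^ 2 = ‖z‖ ^ 2 + ‖w‖ ^ 2 - 2 * (‖z‖ * ‖w‖ * Real.cos (arg z - arg w)) := by
    rw [← normSq_eq_norm_sq, normSq_sub, hre, normSq_eq_norm_sq, normSq_eq_norm_sq]
  have hR : 0 ≤ R := (norm_nonneg z).trans hz
  rw [← sq_le_sq₀ (norm_nonneg _) hR, hsq]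
  have hab : 0 ≤ ‖z‖ * ‖w‖ := by positivity
  nlinarith [mul_nonneg hab (sub_nonneg.2 hcos), mul_nonneg (sub_nonneg.2 hz) (sub_nonneg.2 hw),
    mul_nonneg (norm_nonneg z) (sub_nonneg.2 hz), mul_nonneg (norm_nonneg w) (sub_nonneg.2 hw)]

theorem Complex.card_le_five_of_norm_le_of_lt_norm_sub {ι : Type*} {s : Finset ι} {p : ι → ℂ}
    {R : ℝ} (hp : ∀ j ∈ s, ‖p j‖ ≤ R)
    (hsep : (s : Set ι).Pairwise fun j k => R < ‖p j - p k‖) : #s ≤ 5 := by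
  classical
  have hcos : (s : Set ι).Pairwise fun j k => Real.cos (arg (p j) - arg (p k)) < 1 / 2 :=
    fun j hj k hk hjk => lt_of_not_ge fun h =>
      (hsep hj hk hjk).not_ge (norm_sub_le_of_half_le_cos_arg_sub (hp j hj) (hp k hk) h)
  have hinj : Set.InjOn (fun j => arg (p j)) s := fun j hj k hk heq => by
    by_contra hjk
    have := hcos hj hk hjk
    simp only [heq, sub_self, Real.cos_zero] at this
    norm_num at this
  rw [← card_image_of_injOn hinj]
  refine Real.card_le_five_of_cos_sub_lt_half ?_ ?_
  · simp only [mem_image, forall_exists_index, and_imp, forall_apply_eq_imp_iff₂]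
    exact fun j _ => ⟨neg_pi_lt_arg _, arg_le_pi _⟩
  · rw [coe_image]
    rintro _ ⟨j, hj, rfl⟩ _ ⟨k, hk, rfl⟩ hjk
    exact hcos hj hk fun h => hjk (h ▸ rfl)

theorem card_le_five_of_dist_le_of_lt_dist {E ι : Type*} [NormedAddCommGroup E]
    [InnerProductSpace ℝ E] (hE : Module.finrank ℝ E = 2) {s : Finset ι} {p : ι → E} {c : E}
    {R : ℝ} (hc : ∀ j ∈ s, dist (p j) c ≤ R)
    (hsep : (s : Set ι).Pairwise fun j k => R < dist (p j) (p k)) : #s ≤ 5 := by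
  have : FiniteDimensional ℝ E := Module.finite_of_finrank_eq_succ hE
  let e : E ≃ₗᵢ[ℝ] ℂ := (stdOrthonormalBasis ℝ E).equiv Complex.orthonormalBasisOneI (finCongr hE)
  refine Complex.card_le_five_of_norm_le_of_lt_norm_sub (p := fun j => e (p j - c)) (R := R) ?_ ?_
  · simpa only [LinearIsometryEquiv.norm_map, ← dist_eq_norm] using hc
  · simpa only [← map_sub, LinearIsometryEquiv.norm_map, sub_sub_sub_cancel_right,
      ← dist_eq_norm] using hsep

theorem SimpleGraph.ncard_edgeSet_le_sum_ncard {V : Type*} [Fintype V] (G : SimpleGraph V)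
    (r : V → V → Prop) (h : ∀ ⦃i j⦄, G.Adj i j → r i j ∨ r j i) :
    G.edgeSet.ncard ≤ ∑ i, {j | r i j}.ncard := by
  classical
  let S : Finset (Σ _ : V, V) := univ.sigma fun i => univ.filter (r i)
  have hcover : G.edgeSet ⊆ S.image fun p => s(p.1, p.2) := by
    intro e he
    induction e using Sym2.ind with
    | _ i j =>
      rcases h he with hij | hji
      · exact mem_image.2 ⟨⟨i, j⟩, by simpa [S] using hij, rfl⟩
      · exact mem_image.2 ⟨⟨j, i⟩, by simpa [S] using hji, Sym2.eq_swap⟩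
  calc G.edgeSet.ncard ≤ #(S.image fun p => s(p.1, p.2)) := by
        simpa only [Set.ncard_coe_finset] using Set.ncard_le_ncard hcover (finite_toSet _)
    _ ≤ #S := card_image_le
    _ = ∑ i, #(univ.filter (r i)) := card_sigma _ _
    _ = ∑ i, {j | r i j}.ncard := by
        simp only [← Set.ncard_coe_finset, coe_filter, mem_univ, true_and]

section Algorithm

variable {n : ℕ} {x : Fin n → EuclideanSpace ℝ (Fin 2)} {R : ℝ}

theorem lt_dist_of_initiates {i j k : Fin n} (hj : initiates n x R i j) (hk : initiates n x R i k)
    (hjk : j ≠ k) : R < dist (x j) (x k) := by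
  obtain ⟨hjN, hj_max⟩ := hj
  obtain ⟨hkN, hk_max⟩ := hk
  by_contra! hle
  have hadj : ((gilbert n x R).induce (lesserN n x R i)).Adj ⟨j, hjN⟩ ⟨k, hkN⟩ := ⟨hjk, hle⟩
  exact hjk (le_antisymm (hk_max j hjN hadj.symm.reachable) (hj_max k hkN hadj.reachable))

theorem ncard_initiates_le_five (i : Fin n) : {j | initiates n x R i j}.ncard ≤ 5 := by
  classical
  rw [← coe_filter_univ, Set.ncard_coe_finset]
  refine card_le_five_of_dist_le_of_lt_dist finrank_euclideanSpace_fin (p := x) (c := x i) (R := R) ?_ ?_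
  · intro j hj
    obtain ⟨⟨-, hdist⟩, -⟩ := (mem_filter.1 hj).2
    rwa [dist_comm]
  · intro j hj k hk hjk
    exact lt_dist_of_initiates (mem_filter.1 hj).2 (mem_filter.1 hk).2 hjk

end Algorithm

theorem Agraph_edges_le_five_n_general
    (n : ℕ) (x : Fin n → EuclideanSpace ℝ (Fin 2)) (R : ℝ) :
    (Agraph n x R).edgeSet.ncard ≤ 5 * n :=
  calc (Agraph n x R).edgeSet.ncard ≤ ∑ i, {j | initiates n x R i j}.ncard :=
        (Agraph n x R).ncard_edgeSet_le_sum_ncard _ fun _ _ h => h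
    _ ≤ ∑ _i : Fin n, 5 := sum_le_sum fun i _ => ncard_initiates_le_five i
    _ = 5 * n := by simp [mul_comm]

/-- The topology generated by Algorithm 1 has at most `5 * n` edges. -/
theorem Agraph_edges_le_five_n
    (n : ℕ) (x : Fin n → EuclideanSpace ℝ (Fin 2)) (R : ℝ) (hR : 0 < R) :
    (Agraph n x R).edgeSet.ncard ≤ 5 * n :=
  Agraph_edges_le_five_n_general n x R
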